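/- arXiv:2006.14581 — 4 statements merged into one kernel-verified Lean document; each statement's English description precedes it below -/
import Mathlib

section
/- Korneichuk–Stechkin lemma, upper estimate for Banach-space valued functions: Let a < a' ≤ b' < b be real numbers, let ψ₁: [a,a'] → ℝ and ψ₂: [b',b] → ℝ be bounded measurable functions that are positive almost everywhere and satisfy ∫_a^{a'} ψ₁(t) dt = ∫_{b'}^{b} ψ₂(t) dt, and let ρ: [a,a'] → [b',b] be a function satisfying ∫_a^{s} ψ₁(t) dt = ∫_{ρ(s)}^{b} ψ₂(t) dt for every s ∈ [a,a'] (such ρ exists and is unique since ψ₂ > 0 a.e.). Then for every modulus of continuity ω, every real Banach space E, and every f ∈ H^ω([a,b],E), one has ‖∫_a^{a'} ψ₁(t) f(t) dt − ∫_{b'}^{b} ψ₂(t) f(t) dt‖ ≤ ∫_a^{a'} ψ₁(s) ω(ρ(s) − s) ds. -/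
/-!
Write `μ = ψ₁(t) dt` on `[a, a']` and `ν = ψ₂(t) dt` on `[b', b]`. The defining identity
`μ [a, s] = ν [ρ s, b]`, together with `ψ₂ > 0`, makes `ρ` antitone on `[a, a']` and forces
`ρ₊ μ = ν`: for `b' ≤ u ≤ b`, the set `{s ∈ [a, a'] | u ≤ ρ s}` is an interval `[a, s₁]` whose
`μ`-mass is `ν [u, b]`. Hence `∫ ψ₂ f = ∫ f ∘ ρ dμ`, so the difference to estimate is
`∫ (f s - f (ρ s)) dμ`, and `‖f s - f (ρ s)‖ ≤ ω (ρ s - s)` because `s ≤ a' ≤ b' ≤ ρ s`.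
-/

open MeasureTheory Set

/-- A modulus of continuity: `ω 0 = 0`, continuous, non-decreasing and subadditive on `[0, ∞)`. -/
def IsModulus (ω : ℝ → ℝ) : Prop :=
  ω 0 = 0 ∧ ContinuousOn ω (Set.Ici 0) ∧ MonotoneOn ω (Set.Ici 0) ∧
    ∀ s t : ℝ, 0 ≤ s → 0 ≤ t → ω (s + t) ≤ ω s + ω t

/-- The class `H^ω([a,b], E)`. -/
def HHolder {E : Type*} [NormedAddCommGroup E] (ω : ℝ → ℝ) (a b : ℝ) (f : ℝ → E) : Prop :=
  ∀ s ∈ Set.Icc a b, ∀ t ∈ Set.Icc a b, ‖f t - f s‖ ≤ ω |t - s|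

open Filter Topology

theorem HHolder.continuousOn {E : Type*} [NormedAddCommGroup E] {ω : ℝ → ℝ} {a b : ℝ}
    {f : ℝ → E} (hf : HHolder ω a b f) (hω : Tendsto ω (𝓝[≥] 0) (𝓝 0)) :
    ContinuousOn f (Icc a b) := by
  intro s hs
  have hdist : Tendsto (fun t => |t - s|) (𝓝[Icc a b] s) (𝓝[≥] 0) :=
    tendsto_nhdsWithin_iff.2
      ⟨((continuous_id.sub continuous_const).abs.tendsto' s 0 (by simp)).mono_left
        nhdsWithin_le_nhds, Eventually.of_forall fun t => abs_nonneg (t - s)⟩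
  refine tendsto_iff_norm_sub_tendsto_zero.2
    (squeeze_zero' (Eventually.of_forall fun _ => norm_nonneg _) ?_ (hω.comp hdist))
  filter_upwards [self_mem_nhdsWithin] with t ht using hf s hs t ht

theorem MonotoneOn.exists_sep_le_eq_Icc {F : ℝ → ℝ} {α β c : ℝ} (hαβ : α ≤ β)
    (hFc : ContinuousOn F (Icc α β)) (hFm : MonotoneOn F (Icc α β)) (hc : c ∈ Icc (F α) (F β)) :
    ∃ s ∈ Icc α β, F s = c ∧ {x ∈ Icc α β | F x ≤ c} = Icc α s := by
  set S := {x ∈ Icc α β | F x ≤ c}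
  have hαS : α ∈ S := ⟨left_mem_Icc.2 hαβ, hc.1⟩
  have hbdd : BddAbove S := ⟨β, fun x hx => hx.1.2⟩
  have hSmem : sSup S ∈ S :=
    (hFc.preimage_isClosed_of_isClosed isClosed_Icc isClosed_Iic).csSup_mem ⟨α, hαS⟩ hbdd
  obtain ⟨s₀, hs₀, hFs₀⟩ := intermediate_value_Icc hαβ hFc hc
  have hs₀S : s₀ ∈ S := ⟨hs₀, hFs₀.le⟩
  refine ⟨sSup S, hSmem.1, le_antisymm hSmem.2 ?_, ?_⟩
  · exact hFs₀ ▸ hFm hs₀ hSmem.1 (le_csSup hbdd hs₀S)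
  · ext x
    refine ⟨fun hx => ⟨hx.1.1, le_csSup hbdd hx⟩, fun hx => ?_⟩
    have hxI : x ∈ Icc α β := ⟨hx.1, hx.2.trans hSmem.1.2⟩
    exact ⟨hxI, (hFm hxI hSmem.1 hx.2).trans hSmem.2⟩

theorem norm_integral_sub_integral_map_le {X Y E : Type*} [MeasurableSpace X] [MeasurableSpace Y]
    [NormedAddCommGroup E] [NormedSpace ℝ E] {μ : Measure X} {ρ : X → Y} {f : X → E}
    {g : Y → E} {w : X → ℝ} (hρ : AEMeasurable ρ μ) (hf : Integrable f μ)
    (hg : Integrable g (μ.map ρ)) (hw : Integrable w μ) (hfg : ∀ᵐ x ∂μ, ‖f x - g (ρ x)‖ ≤ w x) :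
    ‖∫ x, f x ∂μ - ∫ y, g y ∂μ.map ρ‖ ≤ ∫ x, w x ∂μ := by
  have hgρ : Integrable (fun x => g (ρ x)) μ := hg.comp_aemeasurable hρ
  rw [integral_map hρ hg.aestronglyMeasurable, ← integral_sub hf hgρ]
  exact norm_integral_le_of_norm_le hw hfg

section IntervalIntegral

variable {ψ : ℝ → ℝ} {α β : ℝ}

theorem integrableOn_Icc_of_abs_le (hψ : Measurable ψ) (hbd : ∃ C, ∀ t ∈ Icc α β, |ψ t| ≤ C) :
    IntegrableOn ψ (Icc α β) := by
  obtain ⟨C, hC⟩ := hbd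
  refine Measure.integrableOn_of_bounded (M := C) measure_Icc_lt_top.ne hψ.aestronglyMeasurable ?_
  filter_upwards [ae_restrict_mem measurableSet_Icc] with t ht using hC t ht

theorem monotoneOn_intervalIntegral_of_ae_nonneg (hψ : IntegrableOn ψ (Icc α β))
    (hnn : 0 ≤ᵐ[volume.restrict (Icc α β)] ψ) :
    MonotoneOn (fun s => ∫ t in α..s, ψ t) (Icc α β) := by
  intro s hs t ht hst
  have hα : α ∈ Icc α β := left_mem_Icc.2 (hs.1.trans hs.2)
  have hdiff := intervalIntegral.integral_interval_sub_left
    (hψ.mono_set (uIcc_subset_Icc hα ht)).intervalIntegrable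
    (hψ.mono_set (uIcc_subset_Icc hα hs)).intervalIntegrable
  have hmid := intervalIntegral.integral_nonneg_of_ae_restrict hst
    (ae_restrict_of_ae_restrict_of_subset (Icc_subset_Icc hs.1 ht.2) hnn)
  dsimp only
  linarith

theorem strictAntiOn_intervalIntegral_of_ae_pos (hψ : IntegrableOn ψ (Icc α β))
    (hpos : ∀ᵐ t ∂(volume.restrict (Icc α β)), 0 < ψ t) :
    StrictAntiOn (fun s => ∫ t in s..β, ψ t) (Icc α β) := by
  intro s hs t ht hst
  have hsub : Ioc s t ⊆ Icc α β := fun x hx => ⟨hs.1.trans hx.1.le, hx.2.trans ht.2⟩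
  have hmid : 0 < ∫ x in s..t, ψ x := by
    have hposIoc : ∀ᵐ x ∂(volume.restrict (Ioc s t)), 0 < ψ x :=
      ae_restrict_of_ae_restrict_of_subset hsub hpos
    rw [intervalIntegral.integral_pos_iff_support_of_nonneg_ae'
      (by rw [uIoc_of_le hst.le]; exact hposIoc.mono fun _ => le_of_lt)
      (hψ.mono_set (uIcc_subset_Icc hs ht)).intervalIntegrable]
    have hsupp : Function.support ψ =ᵐ[volume.restrict (Ioc s t)] univ :=
      eventuallyEq_univ.2 (hposIoc.mono fun _ => ne_of_gt)
    refine ⟨hst, ?_⟩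
    rw [← Measure.restrict_apply' measurableSet_Ioc, measure_congr hsupp,
      Measure.restrict_apply_univ, Real.volume_Ioc]
    exact ENNReal.ofReal_pos.2 (sub_pos.2 hst)
  have hadd := intervalIntegral.integral_add_adjacent_intervals
    (hψ.mono_set (uIcc_subset_Icc hs ht)).intervalIntegrable
    (hψ.mono_set (uIcc_subset_Icc ht (right_mem_Icc.2 (ht.1.trans ht.2)))).intervalIntegrable
  dsimp only
  linarith

end IntervalIntegral

noncomputable def weightedVolume (ψ : ℝ → ℝ) (α β : ℝ) : Measure ℝ :=
  (volume.restrict (Icc α β)).withDensity fun t => ENNReal.ofReal (ψ t)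

section WeightedVolume

variable {ψ : ℝ → ℝ} {α β : ℝ}

theorem isFiniteMeasure_weightedVolume (hψ : IntegrableOn ψ (Icc α β)) :
    IsFiniteMeasure (weightedVolume ψ α β) :=
  isFiniteMeasure_withDensity_ofReal hψ.2

theorem weightedVolume_compl_Icc : weightedVolume ψ α β (Icc α β)ᶜ = 0 :=
  withDensity_absolutelyContinuous _ _ (by simp [Measure.restrict_apply measurableSet_Icc.compl])

theorem integrableOn_Icc_weightedVolume_iff {E : Type*} [NormedAddCommGroup E] {g : ℝ → E} :
    IntegrableOn g (Icc α β) (weightedVolume ψ α β) ↔ Integrable g (weightedVolume ψ α β) := by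
  rw [IntegrableOn, Measure.restrict_eq_self_of_ae_mem (s := Icc α β)
    (mem_ae_iff.2 weightedVolume_compl_Icc)]

theorem ContinuousOn.integrable_weightedVolume {E : Type*} [NormedAddCommGroup E] {g : ℝ → E}
    (hψ : IntegrableOn ψ (Icc α β)) (hg : ContinuousOn g (Icc α β)) :
    Integrable g (weightedVolume ψ α β) :=
  have := isFiniteMeasure_weightedVolume hψ
  integrableOn_Icc_weightedVolume_iff.1 (hg.integrableOn_compact isCompact_Icc)

theorem AntitoneOn.integrable_weightedVolume {g : ℝ → ℝ} (hψ : IntegrableOn ψ (Icc α β))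
    (hg : AntitoneOn g (Icc α β)) : Integrable g (weightedVolume ψ α β) :=
  have := isFiniteMeasure_weightedVolume hψ
  integrableOn_Icc_weightedVolume_iff.1 (hg.integrableOn_isCompact isCompact_Icc)

theorem weightedVolume_Icc (hψ : IntegrableOn ψ (Icc α β))
    (hnn : 0 ≤ᵐ[volume.restrict (Icc α β)] ψ) {x y : ℝ} (hxy : x ≤ y)
    (hsub : Icc x y ⊆ Icc α β) :
    weightedVolume ψ α β (Icc x y) = ENNReal.ofReal (∫ t in x..y, ψ t) := by
  rw [weightedVolume, withDensity_apply _ measurableSet_Icc,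
    Measure.restrict_restrict measurableSet_Icc, inter_eq_self_of_subset_left hsub,
    ← ofReal_integral_eq_lintegral_ofReal (hψ.mono_set hsub)
      (ae_restrict_of_ae_restrict_of_subset hsub hnn),
    intervalIntegral.integral_of_le hxy, integral_Icc_eq_integral_Ioc]

theorem integral_weightedVolume {E : Type*} [NormedAddCommGroup E] [NormedSpace ℝ E]
    (hψ : Measurable ψ) (hnn : 0 ≤ᵐ[volume.restrict (Icc α β)] ψ) (hαβ : α ≤ β) (g : ℝ → E) :
    ∫ x, g x ∂weightedVolume ψ α β = ∫ t in α..β, ψ t • g t := by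
  rw [weightedVolume, integral_withDensity_eq_integral_toReal_smul
      hψ.ennreal_ofReal (Eventually.of_forall fun _ => ENNReal.ofReal_lt_top),
    intervalIntegral.integral_of_le hαβ, ← integral_Icc_eq_integral_Ioc]
  refine integral_congr_ae (hnn.mono fun t ht => ?_)
  simp only [ENNReal.toReal_ofReal ht]

end WeightedVolume

section Rearrangement

variable {ψ₁ ψ₂ ρ : ℝ → ℝ} {a a' b' b : ℝ}

theorem le_iff_intervalIntegral_le_of_intervalIntegral_eq (hi₂ : IntegrableOn ψ₂ (Icc b' b))
    (hpos₂ : ∀ᵐ t ∂(volume.restrict (Icc b' b)), 0 < ψ₂ t)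
    (hρmap : MapsTo ρ (Icc a a') (Icc b' b))
    (hρ : ∀ s ∈ Icc a a', ∫ t in a..s, ψ₁ t = ∫ t in ρ s..b, ψ₂ t)
    {s v : ℝ} (hs : s ∈ Icc a a') (hv : v ∈ Icc b' b) :
    v ≤ ρ s ↔ ∫ t in a..s, ψ₁ t ≤ ∫ t in v..b, ψ₂ t := by
  rw [hρ s hs]
  exact ((strictAntiOn_intervalIntegral_of_ae_pos hi₂ hpos₂).le_iff_ge (hρmap hs) hv).symm

theorem antitoneOn_of_intervalIntegral_eq (hi₁ : IntegrableOn ψ₁ (Icc a a'))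
    (hnn₁ : 0 ≤ᵐ[volume.restrict (Icc a a')] ψ₁) (hi₂ : IntegrableOn ψ₂ (Icc b' b))
    (hpos₂ : ∀ᵐ t ∂(volume.restrict (Icc b' b)), 0 < ψ₂ t)
    (hρmap : MapsTo ρ (Icc a a') (Icc b' b))
    (hρ : ∀ s ∈ Icc a a', ∫ t in a..s, ψ₁ t = ∫ t in ρ s..b, ψ₂ t) :
    AntitoneOn ρ (Icc a a') := by
  intro s hs t ht hst
  rw [le_iff_intervalIntegral_le_of_intervalIntegral_eq hi₂ hpos₂ hρmap hρ hs (hρmap ht),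
    ← hρ t ht]
  exact monotoneOn_intervalIntegral_of_ae_nonneg hi₁ hnn₁ hs ht hst

theorem map_weightedVolume_of_intervalIntegral_eq (haa' : a ≤ a') (hb'b : b' ≤ b)
    (hi₁ : IntegrableOn ψ₁ (Icc a a')) (hnn₁ : 0 ≤ᵐ[volume.restrict (Icc a a')] ψ₁)
    (hi₂ : IntegrableOn ψ₂ (Icc b' b)) (hpos₂ : ∀ᵐ t ∂(volume.restrict (Icc b' b)), 0 < ψ₂ t)
    (hint : ∫ t in a..a', ψ₁ t = ∫ t in b'..b, ψ₂ t)
    (hρm : AEMeasurable ρ (weightedVolume ψ₁ a a')) (hρmap : MapsTo ρ (Icc a a') (Icc b' b))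
    (hρ : ∀ s ∈ Icc a a', ∫ t in a..s, ψ₁ t = ∫ t in ρ s..b, ψ₂ t) :
    (weightedVolume ψ₁ a a').map ρ = weightedVolume ψ₂ b' b := by
  have := isFiniteMeasure_weightedVolume hi₁
  refine Measure.ext_of_Ici _ _ fun u => ?_
  rw [Measure.map_apply_of_aemeasurable hρm measurableSet_Ici,
    ← measure_inter_conull weightedVolume_compl_Icc,
    ← measure_inter_conull (μ := weightedVolume ψ₂ b' b) weightedVolume_compl_Icc]
  rcases le_or_gt u b with hub | hbu
  · set v := max u b'
    have hv : v ∈ Icc b' b := ⟨le_max_right _ _, max_le hub hb'b⟩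
    have hG := (strictAntiOn_intervalIntegral_of_ae_pos hi₂ hpos₂).antitoneOn
    have hc :
        ∫ t in v..b, ψ₂ t ∈ Icc (∫ t in a..a, ψ₁ t) (∫ t in a..a', ψ₁ t) := by
      refine ⟨?_, hint ▸ hG (left_mem_Icc.2 hb'b) hv hv.1⟩
      simpa using hG hv (right_mem_Icc.2 hb'b) hv.2
    obtain ⟨s₁, hs₁, hΦs₁, hlevel⟩ := MonotoneOn.exists_sep_le_eq_Icc haa'
      (intervalIntegral.continuousOn_primitive_interval (by rwa [uIcc_of_le haa']) |>.mono
        (by rw [uIcc_of_le haa']))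
      (monotoneOn_intervalIntegral_of_ae_nonneg hi₁ hnn₁) hc
    have hiff : ∀ s ∈ Icc a a', v ≤ ρ s ↔ ∫ t in a..s, ψ₁ t ≤ ∫ t in v..b, ψ₂ t :=
      fun s hs => le_iff_intervalIntegral_le_of_intervalIntegral_eq hi₂ hpos₂ hρmap hρ hs hv
    have hpre : ρ ⁻¹' Ici u ∩ Icc a a' = Icc a s₁ := by
      rw [← hlevel]
      ext s
      constructor
      · rintro ⟨hus, hs⟩
        exact ⟨hs, (hiff s hs).1 (max_le hus (hρmap hs).1)⟩
      · rintro ⟨hs, hΦ⟩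
        exact ⟨le_of_max_le_left ((hiff s hs).2 hΦ), hs⟩
    have himg : Ici u ∩ Icc b' b = Icc v b := by
      ext t
      simp only [mem_inter_iff, mem_Ici, mem_Icc, v, max_le_iff]
      tauto
    rw [hpre, himg, weightedVolume_Icc hi₁ hnn₁ hs₁.1 (Icc_subset_Icc le_rfl hs₁.2),
      weightedVolume_Icc hi₂ (hpos₂.mono fun _ => le_of_lt) hv.2 (Icc_subset_Icc hv.1 le_rfl), hΦs₁]
  · have h₁ : ρ ⁻¹' Ici u ∩ Icc a a' = ∅ :=
      eq_empty_of_forall_notMem fun s hs => (hbu.trans_le hs.1).not_ge (hρmap hs.2).2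
    have h₂ : Ici u ∩ Icc b' b = ∅ :=
      eq_empty_of_forall_notMem fun t ht => (hbu.trans_le ht.1).not_ge ht.2.2
    rw [h₁, h₂, measure_empty, measure_empty]

end Rearrangement

theorem korneichuk_stechkin_upper_general
    {E : Type*} [NormedAddCommGroup E] [NormedSpace ℝ E]
    (a a' b' b : ℝ) (haa' : a < a') (ha'b' : a' ≤ b') (hb'b : b' < b)
    (ψ₁ ψ₂ : ℝ → ℝ) (hm₁ : Measurable ψ₁) (hm₂ : Measurable ψ₂)
    (hbd₁ : ∃ C, ∀ t ∈ Set.Icc a a', |ψ₁ t| ≤ C)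
    (hbd₂ : ∃ C, ∀ t ∈ Set.Icc b' b, |ψ₂ t| ≤ C)
    (hpos₁ : ∀ᵐ t ∂(volume.restrict (Set.Icc a a')), 0 < ψ₁ t)
    (hpos₂ : ∀ᵐ t ∂(volume.restrict (Set.Icc b' b)), 0 < ψ₂ t)
    (hint : ∫ t in a..a', ψ₁ t = ∫ t in b'..b, ψ₂ t)
    (ρ : ℝ → ℝ) (hρmap : Set.MapsTo ρ (Set.Icc a a') (Set.Icc b' b))
    (hρ : ∀ s ∈ Set.Icc a a', ∫ t in a..s, ψ₁ t = ∫ t in ρ s..b, ψ₂ t)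
    (ω : ℝ → ℝ) (hω : IsModulus ω)
    (f : ℝ → E) (hf : HHolder ω a b f) :
    ‖(∫ t in a..a', ψ₁ t • f t) - ∫ t in b'..b, ψ₂ t • f t‖ ≤
      ∫ s in a..a', ψ₁ s * ω (ρ s - s) := by
  obtain ⟨hω0, hωc, hωm, -⟩ := hω
  have hi₁ := integrableOn_Icc_of_abs_le hm₁ hbd₁
  have hi₂ := integrableOn_Icc_of_abs_le hm₂ hbd₂
  have hnn₁ : 0 ≤ᵐ[volume.restrict (Icc a a')] ψ₁ := hpos₁.mono fun _ => le_of_lt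
  have hnn₂ : 0 ≤ᵐ[volume.restrict (Icc b' b)] ψ₂ := hpos₂.mono fun _ => le_of_lt
  have hIcc₁ : Icc a a' ⊆ Icc a b := Icc_subset_Icc le_rfl (by linarith)
  have hIcc₂ : Icc b' b ⊆ Icc a b := Icc_subset_Icc (by linarith) le_rfl
  have hfc : ContinuousOn f (Icc a b) :=
    hf.continuousOn (by simpa [ContinuousWithinAt, hω0] using hωc 0 self_mem_Ici)
  have hρanti := antitoneOn_of_intervalIntegral_eq hi₁ hnn₁ hi₂ hpos₂ hρmap hρ
  have hρm : AEMeasurable ρ (weightedVolume ψ₁ a a') :=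
    (aemeasurable_restrict_of_antitoneOn measurableSet_Icc hρanti).mono_ac
      (withDensity_absolutelyContinuous _ _)
  have hmap := map_weightedVolume_of_intervalIntegral_eq haa'.le hb'b.le hi₁ hnn₁ hi₂ hpos₂ hint
    hρm hρmap hρ
  have hgap : ∀ s ∈ Icc a a', 0 ≤ ρ s - s := fun s hs => by linarith [hs.2, (hρmap hs).1]
  have hw : AntitoneOn (fun s => ω (ρ s - s)) (Icc a a') := fun s hs t ht hst =>
    hωm (hgap t ht) (hgap s hs) (by linarith [hρanti hs ht hst])
  simp_rw [← smul_eq_mul (a := ψ₁ _)]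
  rw [← integral_weightedVolume hm₁ hnn₁ haa'.le, ← integral_weightedVolume hm₂ hnn₂ hb'b.le,
    ← integral_weightedVolume hm₁ hnn₁ haa'.le, ← hmap]
  refine norm_integral_sub_integral_map_le hρm ((hfc.mono hIcc₁).integrable_weightedVolume hi₁)
    (hmap ▸ (hfc.mono hIcc₂).integrable_weightedVolume hi₂) (hw.integrable_weightedVolume hi₁) ?_
  filter_upwards [mem_ae_iff.2 weightedVolume_compl_Icc] with s hs
  rw [norm_sub_rev, ← abs_of_nonneg (hgap s hs)]
  exact hf s (hIcc₁ hs) (ρ s) (hIcc₂ (hρmap hs))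

/-- Korneichuk–Stechkin lemma, upper estimate for Banach-space valued functions. -/
theorem korneichuk_stechkin_upper
    {E : Type*} [NormedAddCommGroup E] [NormedSpace ℝ E] [CompleteSpace E]
    (a a' b' b : ℝ) (haa' : a < a') (ha'b' : a' ≤ b') (hb'b : b' < b)
    (ψ₁ ψ₂ : ℝ → ℝ) (hm₁ : Measurable ψ₁) (hm₂ : Measurable ψ₂)
    (hbd₁ : ∃ C, ∀ t ∈ Set.Icc a a', |ψ₁ t| ≤ C)
    (hbd₂ : ∃ C, ∀ t ∈ Set.Icc b' b, |ψ₂ t| ≤ C)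
    (hpos₁ : ∀ᵐ t ∂(volume.restrict (Set.Icc a a')), 0 < ψ₁ t)
    (hpos₂ : ∀ᵐ t ∂(volume.restrict (Set.Icc b' b)), 0 < ψ₂ t)
    (hint : ∫ t in a..a', ψ₁ t = ∫ t in b'..b, ψ₂ t)
    (ρ : ℝ → ℝ) (hρmap : Set.MapsTo ρ (Set.Icc a a') (Set.Icc b' b))
    (hρ : ∀ s ∈ Set.Icc a a', ∫ t in a..s, ψ₁ t = ∫ t in ρ s..b, ψ₂ t)
    (ω : ℝ → ℝ) (hω : IsModulus ω)
    (f : ℝ → E) (hf : HHolder ω a b f) :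
    ‖(∫ t in a..a', ψ₁ t • f t) - ∫ t in b'..b, ψ₂ t • f t‖ ≤
      ∫ s in a..a', ψ₁ s * ω (ρ s - s) :=
  korneichuk_stechkin_upper_general a a' b' b haa' ha'b' hb'b ψ₁ ψ₂ hm₁ hm₂ hbd₁ hbd₂ hpos₁ hpos₂
    hint ρ hρmap hρ ω hω f hf
end

section
/- Ostrowski-type inequality for a concentric subinterval: Let a ≤ c < d ≤ b with c + d = a + b (the midpoints of [a,b] and [c,d] coincide). Then for every modulus of continuity ω, every real Banach space E, and every f ∈ H^ω([a,b],E), ‖∫_a^b f(t) dt − ((b−a)/(d−c))∫_c^d f(t) dt‖ ≤ (4(c−a)/(b−a))·∫_0^{(b−a)/2} ω(t) dt. -/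
open MeasureTheory Set

/-!
Split `[a, b]` at `c`, the midpoint `m` and `d`. The decreasing affine map `r` of `[c, m]` onto
`[a, c]` turns `∫_a^c f - ((c - a) / (m - c)) • ∫_c^m f` into a multiple of
`∫_c^m (f (r s) - f s)`, and `|r s - s|` grows linearly in `s - c`, so a second change of variables
bounds it by `((c - a) / (m - a)) * ∫_0^{m - a} ω`. The piece `[m, b]` is the mirror image, and
`m - a = (b - a) / 2`.
-/

namespace HHolder

variable {E : Type*} [NormedAddCommGroup E] {ω : ℝ → ℝ} {a b : ℝ} {f : ℝ → E}

theorem continuousOn_s5 (hω0 : ω 0 = 0) (hω : ContinuousWithinAt ω (Ici 0) 0)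
    (hf : HHolder ω a b f) : ContinuousOn f (Icc a b) := by
  intro s hs
  rw [ContinuousWithinAt, tendsto_iff_norm_sub_tendsto_zero]
  have hdist : ContinuousWithinAt (fun t => ω |t - s|) (Icc a b) s := by
    refine ContinuousWithinAt.comp (by simpa) (by fun_prop) fun t _ => abs_nonneg (t - s)
  rw [ContinuousWithinAt, sub_self, abs_zero, hω0] at hdist
  refine squeeze_zero' (.of_forall fun t => norm_nonneg _) ?_ hdist
  filter_upwards [self_mem_nhdsWithin] with t ht using hf s hs t ht

theorem mono {a' b' : ℝ} (hf : HHolder ω a b f) (ha : a ≤ a') (hb : b' ≤ b) :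
    HHolder ω a' b' f := fun s hs t ht =>
  hf s (Icc_subset_Icc ha hb hs) t (Icc_subset_Icc ha hb ht)

theorem comp_neg (hf : HHolder ω a b f) : HHolder ω (-b) (-a) (fun t => f (-t)) := by
  intro s hs t ht
  have h := hf (-s) ⟨le_neg.1 hs.2, neg_le.1 hs.1⟩ (-t) ⟨le_neg.1 ht.2, neg_le.1 ht.1⟩
  rwa [neg_sub_neg, abs_sub_comm] at h

theorem norm_integral_sub_smul_integral_right_le [NormedSpace ℝ E] {p c q : ℝ} (hpc : p ≤ c)
    (hcq : c < q) (hω0 : ω 0 = 0) (hω : ContinuousOn ω (Ici 0)) (hf : HHolder ω p q f) :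
    ‖(∫ t in p..c, f t) - ((c - p) / (q - c)) • ∫ t in c..q, f t‖ ≤
      (c - p) / (q - p) * ∫ t in (0:ℝ)..(q - p), ω t := by
  set μ := (c - p) / (q - c) with hμ_def
  have hqc : 0 < q - c := sub_pos.2 hcq
  have hμ : 0 ≤ μ := div_nonneg (sub_nonneg.2 hpc) hqc.le
  have h1μ : 1 + μ = (q - p) / (q - c) := by rw [hμ_def]; field_simp; ring
  have hfc := hf.continuousOn_s5 hω0 (hω 0 self_mem_Ici)
  set r : ℝ → ℝ := fun s => (1 + μ) * c - μ * s
  have hr_q : r q = p := by simp only [r, hμ_def]; field_simp; ring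
  have hr_maps : MapsTo r (Icc c q) (Icc p q) := fun s hs => by
    have := mul_le_mul_of_nonneg_left hs.2 hμ
    have := mul_le_mul_of_nonneg_left hs.1 hμ
    constructor <;> simp only [r] <;> nlinarith
  have hreflect : (∫ t in p..c, f t) = μ • ∫ s in c..q, f (r s) := by
    rw [intervalIntegral.smul_integral_comp_sub_mul, ← hr_q]
    congr 1; ring
  have hdiff :
      (∫ t in p..c, f t) - μ • ∫ t in c..q, f t = μ • ∫ s in c..q, (f (r s) - f s) := by
    rw [hreflect, ← smul_sub, intervalIntegral.integral_sub]
    · exact (hfc.comp (by fun_prop) hr_maps).intervalIntegrable_of_Icc hcq.le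
    · exact (hfc.mono (Icc_subset_Icc hpc le_rfl)).intervalIntegrable_of_Icc hcq.le
  have hbound : ‖∫ s in c..q, (f (r s) - f s)‖ ≤ ∫ s in c..q, ω ((1 + μ) * s - (1 + μ) * c) := by
    refine intervalIntegral.norm_integral_le_of_norm_le hcq.le (ae_of_all _ fun s hs => ?_) ?_
    · have hs' : s ∈ Icc c q := Ioc_subset_Icc_self hs
      have hdist : |r s - s| = (1 + μ) * s - (1 + μ) * c := by
        rw [abs_of_nonpos (by simp only [r]; nlinarith [hs'.1])]; ring
      simpa [hdist] using hf s ⟨hpc.trans hs'.1, hs'.2⟩ (r s) (hr_maps hs')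
    · refine (hω.comp (by fun_prop) fun s hs => ?_).intervalIntegrable_of_Icc hcq.le
      exact sub_nonneg.2 (mul_le_mul_of_nonneg_left hs.1 (by positivity))
  have hω_int : ∫ s in c..q, ω ((1 + μ) * s - (1 + μ) * c) =
      (1 + μ)⁻¹ * ∫ t in (0:ℝ)..(q - p), ω t := by
    have hlen : (1 + μ) * q - (1 + μ) * c = q - p := by rw [← mul_sub, h1μ]; field_simp
    rw [intervalIntegral.integral_comp_mul_sub _ (by positivity), sub_self, hlen, smul_eq_mul]
  calc _ = μ * ‖∫ s in c..q, (f (r s) - f s)‖ := by rw [hdiff, norm_smul, Real.norm_of_nonneg hμ]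
    _ ≤ μ * ((1 + μ)⁻¹ * ∫ t in (0:ℝ)..(q - p), ω t) := by gcongr; exact hbound.trans_eq hω_int
    _ = _ := by rw [← mul_assoc, h1μ, hμ_def]; field_simp

theorem norm_integral_sub_smul_integral_left_le [NormedSpace ℝ E] {p c q : ℝ} (hpc : p < c)
    (hcq : c ≤ q) (hω0 : ω 0 = 0) (hω : ContinuousOn ω (Ici 0)) (hf : HHolder ω p q f) :
    ‖(∫ t in c..q, f t) - ((q - c) / (c - p)) • ∫ t in p..c, f t‖ ≤
      (q - c) / (q - p) * ∫ t in (0:ℝ)..(q - p), ω t := by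
  simpa only [intervalIntegral.integral_comp_neg, neg_neg, neg_sub_neg] using
    hf.comp_neg.norm_integral_sub_smul_integral_right_le (neg_le_neg hcq) (neg_lt_neg hpc) hω0 hω

end HHolder

theorem intervalIntegral.integral_sub_one_add_smul_integral_eq {E : Type*} [NormedAddCommGroup E]
    [NormedSpace ℝ E] {f : ℝ → E} {a c m d b : ℝ} (μ : ℝ) (hac : IntervalIntegrable f volume a c)
    (hcm : IntervalIntegrable f volume c m) (hmd : IntervalIntegrable f volume m d)
    (hdb : IntervalIntegrable f volume d b) :
    (∫ t in a..b, f t) - (1 + μ) • ∫ t in c..d, f t =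
      ((∫ t in a..c, f t) - μ • ∫ t in c..m, f t) +
        ((∫ t in d..b, f t) - μ • ∫ t in m..d, f t) := by
  rw [← integral_add_adjacent_intervals (hac.trans (hcm.trans hmd)) hdb,
    ← integral_add_adjacent_intervals hac (hcm.trans hmd),
    ← integral_add_adjacent_intervals hcm hmd]
  module

theorem ostrowski_concentric_general
    {E : Type*} [NormedAddCommGroup E] [NormedSpace ℝ E]
    (a b c d : ℝ) (hac : a ≤ c) (hcd : c < d) (hdb : d ≤ b) (hmid : c + d = a + b)
    (ω : ℝ → ℝ) (hω : IsModulus ω)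
    (f : ℝ → E) (hf : HHolder ω a b f) :
    ‖(∫ t in a..b, f t) - ((b - a) / (d - c)) • ∫ t in c..d, f t‖ ≤
      (4 * (c - a) / (b - a)) * ∫ t in (0:ℝ)..((b - a) / 2), ω t := by
  obtain ⟨hω0, hωc, -⟩ := hω
  set m := (a + b) / 2 with hm
  have hcm : c < m := by linarith
  have hmd : m < d := by linarith
  have hleft := (hf.mono le_rfl (by linarith)).norm_integral_sub_smul_integral_right_le
    hac hcm hω0 hωc
  have hright := (hf.mono (by linarith) le_rfl).norm_integral_sub_smul_integral_left_le
    hmd hdb hω0 hωc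
  rw [show b - d = c - a by linarith, show d - m = m - c by linarith,
    show b - m = m - a by linarith] at hright
  have hfi : ∀ x y, a ≤ x → x ≤ y → y ≤ b → IntervalIntegrable f volume x y :=
    fun x y hx hxy hy => ((hf.continuousOn_s5 hω0 (hωc 0 self_mem_Ici)).mono
      (Icc_subset_Icc hx hy)).intervalIntegrable_of_Icc hxy
  have hba : b - a = 2 * (m - a) := by linarith
  have hcoef : (b - a) / (d - c) = 1 + (c - a) / (m - c) := by
    rw [hba, show d - c = 2 * (m - c) by linarith]
    field_simp [(sub_pos.2 hcm).ne']
    ring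
  rw [hcoef, hba, mul_div_cancel_left₀ _ two_ne_zero,
    intervalIntegral.integral_sub_one_add_smul_integral_eq _ (hfi a c le_rfl hac (by linarith))
      (hfi c m hac hcm.le (by linarith)) (hfi m d (by linarith) hmd.le hdb)
      (hfi d b (by linarith) hdb le_rfl)]
  calc _ ≤ _ := (norm_add_le _ _).trans (add_le_add hleft hright)
    _ = _ := by field_simp [(show 0 < m - a by linarith).ne']; ring

/-- Ostrowski-type inequality for a concentric subinterval (`c + d = a + b`). -/
theorem ostrowski_concentric
    {E : Type*} [NormedAddCommGroup E] [NormedSpace ℝ E] [CompleteSpace E]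
    (a b c d : ℝ) (hac : a ≤ c) (hcd : c < d) (hdb : d ≤ b) (hmid : c + d = a + b)
    (ω : ℝ → ℝ) (hω : IsModulus ω)
    (f : ℝ → E) (hf : HHolder ω a b f) :
    ‖(∫ t in a..b, f t) - ((b - a) / (d - c)) • ∫ t in c..d, f t‖ ≤
      (4 * (c - a) / (b - a)) * ∫ t in (0:ℝ)..((b - a) / 2), ω t :=
  ostrowski_concentric_general a b c d hac hcd hdb hmid ω hω f hf
end

section
/- Existence of a real-valued extremal function with zero interval means (lower-bound lemma for recovery of the function): Let ω be a modulus of continuity, a < b, n ∈ ℕ with n ≥ 1, h > 0, and let t₁, …, t_n satisfy a ≤ t₁ − h, t_i + h < t_{i+1} − h for i = 1, …, n−1, and t_n + h ≤ b. Then there exists a function f ∈ H^ω([a,b],ℝ) such that ∫_{t_i−h}^{t_i+h} f(t) dt = 0 for every i = 1, …, n and max_{t∈[a,b]} |f(t)| ≥ (1/(2h))·∫_{(b−a)/(2n)−h}^{(b−a)/(2n)+h} ω(u) du. -/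
/-!
Put `β = (b - a) / (2n)`. The gaps `t₁ - a`, `tᵢ₊₁ - tᵢ`, `b - tₙ` add up to `2nβ`, so some end
gap is at least `β` or some inner gap at least `2β`; this yields a point `p ∈ [a, b]` at distance
`≥ β` from the knots on either side of it. The lower envelope `ρ` of a cone at `p` and one cone per
window is `1`-Lipschitz, vanishes at `p`, and on the `i`-th window equals `β ± (u - tᵢ)`; the
slopes alternate so that neighbouring windows do not interfere. Then `f = M - ω ∘ ρ`, with `M` the
mean of `ω` over `[β - h, β + h]`, lies in `H^ω` by subadditivity of `ω`, has zero mean over each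
window by the substitution `s = ρ u`, and `f p = M`.
-/

open MeasureTheory Set

namespace IsModulus

variable {ω : ℝ → ℝ}

lemma abs_sub_le (hω : IsModulus ω) {x y : ℝ} (hx : 0 ≤ x) (hy : 0 ≤ y) :
    |ω x - ω y| ≤ ω |x - y| := by
  wlog hxy : y ≤ x generalizing x y
  · rw [abs_sub_comm, abs_sub_comm x]
    exact this hy hx (le_of_not_ge hxy)
  have hsub : ω x ≤ ω y + ω (x - y) := by
    simpa using hω.2.2.2 y (x - y) hy (sub_nonneg.2 hxy)
  have hmono : ω y ≤ ω x := hω.2.2.1 hy hx hxy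
  rw [abs_of_nonneg (sub_nonneg.2 hmono), abs_of_nonneg (sub_nonneg.2 hxy)]
  linarith

lemma hHolder_const_sub_comp (hω : IsModulus ω) {ρ : ℝ → ℝ} (hρ : LipschitzWith 1 ρ)
    (hρ0 : ∀ u, 0 ≤ ρ u) (c a b : ℝ) : HHolder ω a b fun u => c - ω (ρ u) := by
  intro s _ t _
  have hρst : |ρ s - ρ t| ≤ |t - s| := by
    simpa [Real.dist_eq, abs_sub_comm] using hρ.dist_le_mul s t
  calc ‖c - ω (ρ t) - (c - ω (ρ s))‖ = |ω (ρ s) - ω (ρ t)| := by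
        rw [Real.norm_eq_abs]; ring_nf
    _ ≤ ω |ρ s - ρ t| := hω.abs_sub_le (hρ0 s) (hρ0 t)
    _ ≤ ω |t - s| := hω.2.2.1 (abs_nonneg (ρ s - ρ t)) (abs_nonneg (t - s)) hρst

lemma intervalIntegrable (hω : IsModulus ω) {a b : ℝ} (ha : 0 ≤ a) (hb : 0 ≤ b) :
    IntervalIntegrable ω volume a b :=
  (hω.2.1.mono fun _ hx => le_trans (le_min ha hb) hx.1).intervalIntegrable

end IsModulus

lemma sub_le_mul_of_succ_sub_le {t : ℕ → ℝ} {d : ℝ} {m j : ℕ} (hmj : m ≤ j)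
    (ht : ∀ i, m ≤ i → i < j → t (i + 1) - t i ≤ d) : t j - t m ≤ d * (j - m) := by
  induction j, hmj using Nat.le_induction with
  | base => simp
  | succ j hmj ih =>
    have hstep := ht j hmj j.lt_succ_self
    have hprev := ih fun i hi hij => ht i hi (hij.trans j.lt_succ_self)
    push_cast
    linarith

lemma mul_le_sub_of_le_succ_sub {t : ℕ → ℝ} {d : ℝ} {m j : ℕ} (hmj : m ≤ j)
    (ht : ∀ i, m ≤ i → i < j → d ≤ t (i + 1) - t i) : d * (j - m) ≤ t j - t m := by
  have := sub_le_mul_of_succ_sub_le (t := fun i => -t i) (d := -d) hmj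
    fun i hi hij => by linarith [ht i hi hij]
  linarith

lemma exists_gap {a b β : ℝ} {n : ℕ} {t : ℕ → ℝ} (hn : 0 < n) (hβ : b - a = 2 * n * β)
    (ha : a ≤ t 1) (hb : t n ≤ b) (hmono : ∀ i, 1 ≤ i → i < n → t i ≤ t (i + 1)) :
    ∃ k ≤ n, ∃ p ∈ Icc a b, (1 ≤ k → t k + β ≤ p) ∧ (k < n → p + β ≤ t (k + 1)) := by
  have hle : ∀ i j, 1 ≤ i → i ≤ j → j ≤ n → t i ≤ t j := fun i j hi hij hjn => by
    have := mul_le_sub_of_le_succ_sub (d := 0) hij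
      fun l hl hlj => sub_nonneg.2 (hmono l (hi.trans hl) (by omega))
    linarith
  have hab : a ≤ b := (ha.trans (hle 1 n le_rfl hn le_rfl)).trans hb
  by_cases h1 : a + β ≤ t 1
  · exact ⟨0, n.zero_le, a, ⟨le_rfl, hab⟩, by omega, fun _ => h1⟩
  by_cases h2 : t n + β ≤ b
  · exact ⟨n, le_rfl, b, ⟨hab, le_rfl⟩, fun _ => h2, by omega⟩
  by_cases h3 : ∃ i, 1 ≤ i ∧ i < n ∧ 2 * β ≤ t (i + 1) - t i
  · obtain ⟨i, hi, hin, hgap⟩ := h3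
    refine ⟨i, hin.le, (t i + t (i + 1)) / 2, ⟨?_, ?_⟩, fun _ => by linarith, fun _ => by linarith⟩
    · linarith [hle 1 i le_rfl hi hin.le, hmono i hi hin]
    · linarith [hle (i + 1) n (by omega) hin le_rfl, hmono i hi hin]
  push Not at h1 h2 h3
  have := sub_le_mul_of_succ_sub_le (d := 2 * β) hn fun i hi hin => (h3 i hi hin).le
  push_cast at this
  linarith

section Knots

variable {t : ℕ → ℝ} {h : ℝ} {n : ℕ}

lemma le_knot_sub_knot (hsep : ∀ i, 1 ≤ i → i < n → t i + h < t (i + 1) - h) {i j : ℕ}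
    (hi : 1 ≤ i) (hij : i ≤ j) (hjn : j ≤ n) : 2 * h * (j - i) ≤ t j - t i :=
  mul_le_sub_of_le_succ_sub hij fun l hl hlj => by linarith [hsep l (hi.trans hl) (by omega)]

lemma knots_far_or_adjacent (hh : 0 ≤ h) (hsep : ∀ i, 1 ≤ i → i < n → t i + h < t (i + 1) - h)
    {ε : ℕ → ℝ} (hε : ∀ j, ε (j + 1) = -ε j) {i j : ℕ} (hi : 1 ≤ i) (hin : i ≤ n)
    (hj : 1 ≤ j) (hjn : j ≤ n) (hij : i ≠ j) :
    4 * h ≤ |t i - t j| ∨ (2 * h ≤ |t i - t j| ∧ ε j = -ε i) := by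
  wlog hlt : i < j generalizing i j
  · rw [abs_sub_comm, eq_comm, neg_eq_iff_eq_neg]
    exact this hj hjn hi hin hij.symm (by omega)
  have hdist := le_knot_sub_knot hsep hi hlt.le hjn
  rw [abs_sub_comm, abs_of_nonneg (by nlinarith [(Nat.cast_lt (α := ℝ)).2 hlt])]
  obtain rfl | hij2 : j = i + 1 ∨ i + 2 ≤ j := by omega
  · exact Or.inr ⟨by push_cast at hdist; linarith, hε i⟩
  · have : (2 : ℝ) ≤ j - i := by
      rw [le_sub_iff_add_le']; exact_mod_cast hij2
    exact Or.inl (by nlinarith)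

lemma gap_point_far (hh : 0 ≤ h) (hsep : ∀ i, 1 ≤ i → i < n → t i + h < t (i + 1) - h)
    {β p : ℝ} (hβ : 0 ≤ β) {k : ℕ} (hkn : k ≤ n) (hleft : 1 ≤ k → t k + β ≤ p)
    (hright : k < n → p + β ≤ t (k + 1)) {ε : ℕ → ℝ} (hεk : ε k = -1) (hεk1 : ε (k + 1) = 1)
    {i : ℕ} (hi : 1 ≤ i) (hin : i ≤ n) :
    β ≤ |p - t i| ∧ (β + 2 * h ≤ |p - t i| ∨ ε i * (p - t i) ≤ 0) := by
  rcases le_or_gt i k with hik | hki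
  · have hdist := le_knot_sub_knot hsep hi hik hkn
    have hp := hleft (hi.trans hik)
    have hpi := le_abs_self (p - t i)
    obtain rfl | hik' := hik.eq_or_lt
    · exact ⟨by linarith, Or.inr (by rw [hεk]; linarith)⟩
    · have : (1 : ℝ) ≤ k - i := by rw [le_sub_iff_add_le']; exact_mod_cast hik'
      exact ⟨by nlinarith, Or.inl (by nlinarith)⟩
  · have hdist := le_knot_sub_knot hsep (by omega : 1 ≤ k + 1) hki hin
    have hp := hright (by omega)
    have hpi := neg_abs_le (p - t i)
    obtain rfl | hki' := (show k + 1 ≤ i from hki).eq_or_lt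
    · exact ⟨by linarith, Or.inr (by rw [hεk1]; linarith)⟩
    · have : (1 : ℝ) ≤ i - (k + 1 : ℕ) := by rw [le_sub_iff_add_le']; exact_mod_cast hki'
      exact ⟨by nlinarith, Or.inl (by nlinarith)⟩

end Knots

lemma tent_eq_abs {x h ε u : ℝ} (hε : ε = 1 ∨ ε = -1) (hu : u ∈ Icc (x - h) (x + h)) :
    h + ε * (u - x) = |u - (x - ε * h)| := by
  obtain ⟨hu₁, hu₂⟩ := hu
  rcases hε with rfl | rfl
  · rw [abs_of_nonneg (by linarith)]; ring
  · rw [abs_of_nonpos (by linarith)]; ring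

lemma tent_le_abs_of_far {x y h ε δ u : ℝ} (hε : ε = 1 ∨ ε = -1)
    (hδ : δ = 1 ∨ δ = -1) (hu : u ∈ Icc (x - h) (x + h))
    (hfar : 4 * h ≤ |x - y| ∨ (2 * h ≤ |x - y| ∧ δ = -ε)) :
    h + ε * (u - x) ≤ |u - (y - δ * h)| := by
  obtain ⟨hu₁, hu₂⟩ := hu
  by_contra! hlt
  rw [abs_lt] at hlt
  rcases hfar with hfar | ⟨hfar, rfl⟩ <;> rcases hε with rfl | rfl <;>
    try rcases hδ with rfl | rfl
  all_goals rcases abs_cases (x - y) with ⟨hxy, -⟩ | ⟨hxy, -⟩ <;> linarith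

lemma tent_add_le_abs_of_far {x p β h ε u : ℝ} (hε : ε = 1 ∨ ε = -1)
    (hu : u ∈ Icc (x - h) (x + h)) (hfar : β ≤ |p - x|)
    (hside : β + 2 * h ≤ |p - x| ∨ ε * (p - x) ≤ 0) :
    β + ε * (u - x) ≤ |u - p| := by
  obtain ⟨hu₁, hu₂⟩ := hu
  by_contra! hlt
  rw [abs_lt] at hlt
  rcases hε with rfl | rfl <;> rcases abs_cases (p - x) with ⟨hpx, -⟩ | ⟨hpx, -⟩ <;>
    rcases hside with hside | hside <;> linarith

lemma lipschitzWith_fold_min {α ι : Type*} [PseudoMetricSpace α] (s : Finset ι) {g : α → ℝ}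
    {F : ι → α → ℝ} (hg : LipschitzWith 1 g) (hF : ∀ j ∈ s, LipschitzWith 1 (F j)) :
    LipschitzWith 1 fun x => s.fold min (g x) fun j => F j x := by
  refine LipschitzWith.of_le_add fun x y => ?_
  rw [← sub_le_iff_le_add, Finset.le_fold_min]
  refine ⟨?_, fun j hj => ?_⟩
  · have hx : s.fold min (g x) (fun j => F j x) ≤ g x := (Finset.fold_min_le _).2 (Or.inl le_rfl)
    have hxy : g x ≤ g y + dist x y := by simpa using hg.le_add_mul x y
    linarith
  · have hx : s.fold min (g x) (fun j => F j x) ≤ F j x :=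
      (Finset.fold_min_le _).2 (Or.inr ⟨j, hj, le_rfl⟩)
    have hxy : F j x ≤ F j y + dist x y := by simpa using (hF j hj).le_add_mul x y
    linarith

lemma lipschitzWith_const_add_abs_sub (v c : ℝ) : LipschitzWith 1 fun u : ℝ => v + |u - c| :=
  LipschitzWith.of_le_add fun x y => by rw [Real.dist_eq]; linarith [abs_sub_le x y c]

/-- The cone at `p` has height `0`; the cone of knot `j` has height `β - h` and its vertex at the
endpoint `t j - ε j * h` of the window, so that on that window it equals `β + ε j * (u - t j)`. -/
def tentEnvelope (p β h : ℝ) (t ε : ℕ → ℝ) (n : ℕ) (u : ℝ) : ℝ :=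
  (Finset.Icc 1 n).fold min |u - p| fun j => β - h + |u - (t j - ε j * h)|

section TentEnvelope

variable {p β h : ℝ} {t ε : ℕ → ℝ} {n : ℕ}

lemma lipschitzWith_tentEnvelope : LipschitzWith 1 (tentEnvelope p β h t ε n) :=
  lipschitzWith_fold_min _ (by simpa using lipschitzWith_const_add_abs_sub 0 p)
    fun _ _ => lipschitzWith_const_add_abs_sub _ _

lemma tentEnvelope_nonneg (hhβ : h ≤ β) (u : ℝ) : 0 ≤ tentEnvelope p β h t ε n u :=
  (Finset.le_fold_min _).2
    ⟨abs_nonneg _, fun j _ => by linarith [abs_nonneg (u - (t j - ε j * h))]⟩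

lemma tentEnvelope_self (hhβ : h ≤ β) : tentEnvelope p β h t ε n p = 0 :=
  le_antisymm ((Finset.fold_min_le _).2 (Or.inl (by simp))) (tentEnvelope_nonneg hhβ p)

lemma tentEnvelope_eq_of_mem_window (hε : ∀ j, ε j = 1 ∨ ε j = -1) {i : ℕ} (hi : 1 ≤ i)
    (hin : i ≤ n)
    (hfar : ∀ j, 1 ≤ j → j ≤ n → j ≠ i →
      4 * h ≤ |t i - t j| ∨ (2 * h ≤ |t i - t j| ∧ ε j = -ε i))
    (hp : β ≤ |p - t i| ∧ (β + 2 * h ≤ |p - t i| ∨ ε i * (p - t i) ≤ 0))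
    {u : ℝ} (hu : u ∈ Icc (t i - h) (t i + h)) :
    tentEnvelope p β h t ε n u = β + ε i * (u - t i) := by
  have hown := tent_eq_abs (hε i) hu
  refine le_antisymm
    ((Finset.fold_min_le _).2 (Or.inr ⟨i, Finset.mem_Icc.2 ⟨hi, hin⟩, by linarith⟩)) ?_
  refine (Finset.le_fold_min _).2 ⟨tent_add_le_abs_of_far (hε i) hu hp.1 hp.2, fun j hj => ?_⟩
  obtain ⟨hj, hjn⟩ := Finset.mem_Icc.1 hj
  rcases eq_or_ne j i with rfl | hji
  · linarith
  · linarith [tent_le_abs_of_far (hε i) (hε j) hu (hfar j hj hjn hji)]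

end TentEnvelope

lemma exists_tent_function {t : ℕ → ℝ} {h β p : ℝ} {n k : ℕ} (hh : 0 ≤ h) (hhβ : h ≤ β)
    (hsep : ∀ i, 1 ≤ i → i < n → t i + h < t (i + 1) - h) (hkn : k ≤ n)
    (hleft : 1 ≤ k → t k + β ≤ p) (hright : k < n → p + β ≤ t (k + 1)) :
    ∃ ρ : ℝ → ℝ, LipschitzWith 1 ρ ∧ (∀ u, 0 ≤ ρ u) ∧ ρ p = 0 ∧
      ∀ i, 1 ≤ i → i ≤ n → ∃ ε : ℝ, (ε = 1 ∨ ε = -1) ∧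
        ∀ u ∈ Icc (t i - h) (t i + h), ρ u = β + ε * (u - t i) := by
  set ε : ℕ → ℝ := fun j => (-1) ^ (j + k + 1)
  have hε : ∀ j, ε j = 1 ∨ ε j = -1 := fun j => neg_one_pow_eq_or ℝ _
  have hεsucc : ∀ j, ε (j + 1) = -ε j := fun j => by
    simp only [ε, add_right_comm j 1 k, pow_succ _ (j + k + 1), mul_neg_one]
  have hεk : ε k = -1 := Odd.neg_one_pow ⟨k, by ring⟩
  have hεk1 : ε (k + 1) = 1 := Even.neg_one_pow ⟨k + 1, by ring⟩
  refine ⟨tentEnvelope p β h t ε n, lipschitzWith_tentEnvelope, tentEnvelope_nonneg hhβ,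
    tentEnvelope_self hhβ, fun i hi hin => ⟨ε i, hε i, fun u hu => ?_⟩⟩
  exact tentEnvelope_eq_of_mem_window hε hi hin
    (fun j hj hjn hji => knots_far_or_adjacent hh hsep hεsucc hi hin hj hjn hji.symm)
    (gap_point_far hh hsep (hh.trans hhβ) hkn hleft hright hεk hεk1 hi hin) hu

lemma integral_comp_window (g : ℝ → ℝ) {ε : ℝ} (hε : ε = 1 ∨ ε = -1) (x β h : ℝ) :
    ∫ u in (x - h)..(x + h), g (β + ε * (u - x)) = ∫ s in (β - h)..(β + h), g s := by
  rcases hε with rfl | rfl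
  · convert intervalIntegral.integral_comp_add_right g (β - x) (a := x - h) (b := x + h)
      using 2
    · ext u; congr 1; ring
    all_goals ring
  · convert intervalIntegral.integral_comp_sub_left g (β + x) (a := x - h) (b := x + h)
      using 2
    · ext u; congr 1; ring
    all_goals ring

lemma integral_mean_sub_eq_zero {g : ℝ → ℝ} {c h : ℝ} (hh : h ≠ 0)
    (hg : IntervalIntegrable g volume (c - h) (c + h)) :
    ∫ s in (c - h)..(c + h), (1 / (2 * h) * (∫ s in (c - h)..(c + h), g s) - g s) = 0 := by
  rw [intervalIntegral.integral_sub intervalIntegrable_const hg, intervalIntegral.integral_const,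
    smul_eq_mul]
  field_simp
  ring

theorem extremal_zero_means_general
    (ω : ℝ → ℝ) (hω : IsModulus ω)
    (a b : ℝ) (n : ℕ) (hn : 0 < n) (h : ℝ) (hh : 0 < h)
    (t : ℕ → ℝ) (hta : a ≤ t 1 - h)
    (htsep : ∀ i, 1 ≤ i → i < n → t i + h < t (i + 1) - h)
    (htb : t n + h ≤ b) :
    ∃ f : ℝ → ℝ, HHolder ω a b f ∧
      (∀ i, 1 ≤ i → i ≤ n → ∫ u in (t i - h)..(t i + h), f u = 0) ∧
      ∃ u ∈ Set.Icc a b,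
        (1 / (2 * h)) *
            ∫ s in ((b - a) / (2 * (n : ℝ)) - h)..((b - a) / (2 * (n : ℝ)) + h), ω s ≤
          |f u| := by
  set β := (b - a) / (2 * (n : ℝ)) with hβ
  have hn' : (0 : ℝ) < n := Nat.cast_pos.2 hn
  have hba : b - a = 2 * n * β := by rw [hβ]; field_simp
  have hhβ : h ≤ β := by
    have hspan := le_knot_sub_knot htsep le_rfl hn le_rfl
    push_cast at hspan
    nlinarith
  obtain ⟨k, hkn, p, hp, hleft, hright⟩ := exists_gap hn hba (by linarith) (by linarith)
    fun i hi hin => by linarith [htsep i hi hin]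
  obtain ⟨ρ, hρ, hρ0, hρp, hρwin⟩ := exists_tent_function hh.le hhβ htsep hkn hleft hright
  set M := 1 / (2 * h) * ∫ s in (β - h)..(β + h), ω s
  refine ⟨fun u => M - ω (ρ u), hω.hHolder_const_sub_comp hρ hρ0 M a b, fun i hi hin => ?_,
    p, hp, ?_⟩
  · obtain ⟨ε, hε, hρi⟩ := hρwin i hi hin
    rw [intervalIntegral.integral_congr fun u hu => by
      rw [hρi u (uIcc_of_le (by linarith : t i - h ≤ t i + h) ▸ hu)]]
    exact (integral_comp_window (fun s => M - ω s) hε (t i) β h).trans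
      (integral_mean_sub_eq_zero hh.ne' (hω.intervalIntegrable (by linarith) (by linarith)))
  · simp only [hρp, hω.1, sub_zero]
    exact le_abs_self M

/-- Existence of a real-valued extremal function with zero mean values over the intervals
`[tᵢ − h, tᵢ + h]`, `i = 1, …, n`, and large uniform norm. -/
theorem extremal_zero_means
    (ω : ℝ → ℝ) (hω : IsModulus ω)
    (a b : ℝ) (hab : a < b) (n : ℕ) (hn : 0 < n) (h : ℝ) (hh : 0 < h)
    (t : ℕ → ℝ) (hta : a ≤ t 1 - h)
    (htsep : ∀ i, 1 ≤ i → i < n → t i + h < t (i + 1) - h)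
    (htb : t n + h ≤ b) :
    ∃ f : ℝ → ℝ, HHolder ω a b f ∧
      (∀ i, 1 ≤ i → i ≤ n → ∫ u in (t i - h)..(t i + h), f u = 0) ∧
      ∃ u ∈ Set.Icc a b,
        (1 / (2 * h)) *
            ∫ s in ((b - a) / (2 * (n : ℝ)) - h)..((b - a) / (2 * (n : ℝ)) + h), ω s ≤
          |f u| :=
  extremal_zero_means_general ω hω a b n hn h hh t hta htsep htb
end

section
/- Existence of a real-valued extremal function with zero interval means and large integral (lower-bound lemma for recovery of the integral): Let ω be a concave modulus of continuity, a < b, n ∈ ℕ with n ≥ 1, h > 0, and let t₁, …, t_n satisfy a ≤ t₁ − h, t_i + h < t_{i+1} − h for i = 1, …, n−1, and t_n + h ≤ b. Then there exists a function f ∈ H^ω([a,b],ℝ) such that ∫_{t_i−h}^{t_i+h} f(t) dt = 0 for every i = 1, …, n and ∫_a^b f(t) dt ≥ 2n·(1 − 2nh/(b−a))·∫_0^{(b−a)/(2n)} ω(t) dt. -/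
/-!
Put `Δ = (b - a) / (2n)` and `θ = h / Δ ≤ 1`. The extremal function is `f u = F (dist u {tᵢ})`
for the profile `F x = c + (1 - θ) ω((x - h)₊ / (1 - θ)) - θ ω((h - x)₊ / θ)`. Subadditivity
bounds the increments of each term, and concavity (Jensen for the two perspective functions)
recombines them: `|F y - F x| ≤ ω |y - x|`. Distance to a set is 1-Lipschitz, so `f ∈ H^ω`.
The constant `c` is chosen so that `∫₀^h F = 0`, which makes every window integral vanish and
gives `∫₀^Δ F = (1 - θ) ∫₀^Δ ω`. As `F` is monotone, `y ↦ ∫₀^y F` lies above the line of slope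
`F Δ` through that value at `Δ`. The nodes and the midpoints between them cut `[a, b]` into
`2n` pieces on which `f` is `F` of the distance to one endpoint; their lengths add up to `2nΔ`,
so the slopes cancel and `∫ₐᵇ f ≥ 2n (1 - θ) ∫₀^Δ ω`.
-/

open MeasureTheory Set

open intervalIntegral Metric

/-- `perspective ω 0 = 0` because `x / 0 = 0`; the weight `1 - h / Δ` in `extremalProfile`
vanishes when `2 n h = b - a`. -/
noncomputable def perspective (ω : ℝ → ℝ) (c x : ℝ) : ℝ := c * ω (x / c)

namespace IsModulus

variable {ω : ℝ → ℝ}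

lemma mono (hω : IsModulus ω) {x y : ℝ} (hx : 0 ≤ x) (hxy : x ≤ y) : ω x ≤ ω y :=
  hω.2.2.1 (mem_Ici.2 hx) (mem_Ici.2 (hx.trans hxy)) hxy

lemma perspective_zero_right (hω : IsModulus ω) (c : ℝ) : perspective ω c 0 = 0 := by
  simp [perspective, hω.1]

lemma perspective_le_perspective (hω : IsModulus ω) {c x y : ℝ} (hc : 0 ≤ c) (hx : 0 ≤ x)
    (hxy : x ≤ y) : perspective ω c x ≤ perspective ω c y :=
  mul_le_mul_of_nonneg_left (hω.mono (div_nonneg hx hc) (div_le_div_of_nonneg_right hxy hc)) hc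

lemma perspective_sub_perspective_le (hω : IsModulus ω) {c x y : ℝ} (hc : 0 ≤ c) (hx : 0 ≤ x)
    (hxy : x ≤ y) : perspective ω c y - perspective ω c x ≤ perspective ω c (y - x) := by
  have hsub := hω.2.2.2 (x / c) ((y - x) / c) (div_nonneg hx hc)
    (div_nonneg (sub_nonneg.2 hxy) hc)
  rw [← add_div, add_sub_cancel] at hsub
  unfold perspective
  nlinarith [mul_le_mul_of_nonneg_left hsub hc]

lemma continuousOn_perspective (hω : IsModulus ω) {c : ℝ} (hc : 0 ≤ c) :
    ContinuousOn (perspective ω c) (Ici 0) :=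
  continuousOn_const.mul <| hω.2.1.comp (continuousOn_id.div_const c)
    fun _ hx => mem_Ici.2 (div_nonneg hx hc)

lemma intervalIntegrable_perspective (hω : IsModulus ω) {c y : ℝ} (hc : 0 ≤ c) (hy : 0 ≤ y) :
    IntervalIntegrable (perspective ω c) volume 0 y :=
  ((hω.continuousOn_perspective hc).mono Icc_subset_Ici_self).intervalIntegrable_of_Icc hy

end IsModulus

lemma perspective_add_perspective_le {ω : ℝ → ℝ} (hω : IsModulus ω)
    (hconc : ConcaveOn ℝ (Ici 0) ω) {θ A B : ℝ} (hθ₀ : 0 ≤ θ) (hθ₁ : θ ≤ 1)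
    (hA : 0 ≤ A) (hB : 0 ≤ B) :
    perspective ω (1 - θ) A + perspective ω θ B ≤ ω (A + B) := by
  have hμ : 0 ≤ 1 - θ := sub_nonneg.2 hθ₁
  have hmul_div : ∀ {c x : ℝ}, 0 ≤ c → 0 ≤ x → c * (x / c) ≤ x := fun hc hx => by
    rcases hc.eq_or_lt with rfl | hc
    · simpa using hx
    · rw [mul_div_cancel₀ _ hc.ne']
  calc perspective ω (1 - θ) A + perspective ω θ B
      ≤ ω ((1 - θ) * (A / (1 - θ)) + θ * (B / θ)) :=
        hconc.2 (mem_Ici.2 (div_nonneg hA hμ)) (mem_Ici.2 (div_nonneg hB hθ₀)) hμ hθ₀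
          (by ring)
    _ ≤ ω (A + B) := hω.mono (by positivity) (add_le_add (hmul_div hμ hA) (hmul_div hθ₀ hB))

lemma integral_perspective (ω : ℝ → ℝ) (c Δ : ℝ) :
    ∫ x in 0..c * Δ, perspective ω c x = c ^ 2 * ∫ x in 0..Δ, ω x := by
  rcases eq_or_ne c 0 with rfl | hc
  · simp
  · simp only [perspective, intervalIntegral.integral_const_mul,
      intervalIntegral.integral_comp_div _ hc, zero_div, mul_div_cancel_left₀ _ hc, smul_eq_mul]
    ring

lemma Monotone.mul_sub_le_integral {g : ℝ → ℝ} (hg : Monotone g) (c y : ℝ) :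
    g c * (y - c) ≤ ∫ x in c..y, g x := by
  rcases le_total c y with hcy | hyc
  · have := intervalIntegral.integral_mono_on (μ := volume) hcy intervalIntegrable_const
      hg.intervalIntegrable fun x hx => hg hx.1
    rwa [intervalIntegral.integral_const, smul_eq_mul, mul_comm] at this
  · have := intervalIntegral.integral_mono_on (μ := volume) hyc hg.intervalIntegrable
      intervalIntegrable_const fun x hx => hg hx.2
    rw [intervalIntegral.integral_const, smul_eq_mul] at this
    rw [intervalIntegral.integral_symm]
    linarith

lemma integral_comp_abs_sub {g : ℝ → ℝ} (hg : Continuous g) (c : ℝ) {r : ℝ} (hr : 0 ≤ r) :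
    ∫ u in c - r..c + r, g |u - c| = 2 * ∫ s in 0..r, g s := by
  have hint : ∀ p q : ℝ, IntervalIntegrable (fun u => g |u - c|) volume p q := fun p q =>
    (hg.comp (continuous_abs.comp (continuous_id.sub continuous_const))).intervalIntegrable p q
  have hleft : EqOn (fun u => g |u - c|) (fun u => g (c - u)) (uIcc (c - r) c) := by
    intro u hu
    rw [uIcc_of_le (by linarith)] at hu
    simp only [abs_of_nonpos (sub_nonpos.2 hu.2), neg_sub]
  have hright : EqOn (fun u => g |u - c|) (fun u => g (u - c)) (uIcc c (c + r)) := by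
    intro u hu
    rw [uIcc_of_le (by linarith)] at hu
    simp only [abs_of_nonneg (sub_nonneg.2 hu.1)]
  rw [← integral_add_adjacent_intervals (hint _ c) (hint c _), integral_congr hleft,
    integral_congr hright, integral_comp_sub_left, integral_comp_sub_right]
  simp only [sub_self, sub_sub_cancel, add_sub_cancel_left]
  ring

lemma integral_comp_min_sub_sub {g : ℝ → ℝ} (hg : Continuous g) {p q : ℝ} (hpq : p ≤ q) :
    ∫ u in p..q, g (min (u - p) (q - u)) = 2 * ∫ s in 0..(q - p) / 2, g s := by
  have hmin : ∀ u, min (u - p) (q - u) = (q - p) / 2 - |u - (p + q) / 2| := by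
    intro u
    rcases le_total u ((p + q) / 2) with hu | hu
    · rw [min_eq_left (by linarith), abs_of_nonpos (by linarith)]; ring
    · rw [min_eq_right (by linarith), abs_of_nonneg (by linarith)]; ring
  have := integral_comp_abs_sub (g := fun s => g ((q - p) / 2 - s)) (by fun_prop) ((p + q) / 2)
    (r := (q - p) / 2) (by linarith)
  rw [show (p + q) / 2 - (q - p) / 2 = p by ring, show (p + q) / 2 + (q - p) / 2 = q by ring,
    integral_comp_sub_left (fun s => g s), sub_self, sub_zero] at this
  simp only [hmin, this]

noncomputable def extremalProfile (ω : ℝ → ℝ) (h Δ x : ℝ) : ℝ :=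
  h / Δ ^ 2 * (∫ s in 0..Δ, ω s) + perspective ω (1 - h / Δ) (max (x - h) 0)
    - perspective ω (h / Δ) (max (h - x) 0)

section extremalProfile

variable {ω : ℝ → ℝ} {h Δ : ℝ}

lemma extremalProfile_monotone (hω : IsModulus ω) (hh : 0 ≤ h) (hhΔ : h ≤ Δ) :
    Monotone (extremalProfile ω h Δ) := by
  intro x y hxy
  obtain ⟨hθ₀, hθ₁⟩ := unitInterval.div_mem hh (hh.trans hhΔ) hhΔ
  have hpos := hω.perspective_le_perspective (sub_nonneg.2 hθ₁) (le_max_right (x - h) 0)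
    (max_le_max_right 0 (sub_le_sub_right hxy h))
  have hneg := hω.perspective_le_perspective hθ₀ (le_max_right (h - y) 0)
    (max_le_max_right 0 (sub_le_sub_left hxy h))
  unfold extremalProfile
  linarith

lemma extremalProfile_sub_le (hω : IsModulus ω) (hconc : ConcaveOn ℝ (Ici 0) ω) (hh : 0 ≤ h)
    (hhΔ : h ≤ Δ) {x y : ℝ} (hxy : x ≤ y) :
    extremalProfile ω h Δ y - extremalProfile ω h Δ x ≤ ω (y - x) := by
  obtain ⟨hθ₀, hθ₁⟩ := unitInterval.div_mem hh (hh.trans hhΔ) hhΔ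
  have hP : max (x - h) 0 ≤ max (y - h) 0 := max_le_max_right 0 (sub_le_sub_right hxy h)
  have hN : max (h - y) 0 ≤ max (h - x) 0 := max_le_max_right 0 (sub_le_sub_left hxy h)
  have hpos := hω.perspective_sub_perspective_le (sub_nonneg.2 hθ₁) (le_max_right _ _) hP
  have hneg := hω.perspective_sub_perspective_le hθ₀ (le_max_right _ _) hN
  have hjensen := perspective_add_perspective_le hω hconc hθ₀ hθ₁ (sub_nonneg.2 hP)
    (sub_nonneg.2 hN)
  have hsplit : max (y - h) 0 - max (x - h) 0 + (max (h - x) 0 - max (h - y) 0) = y - x := by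
    have := max_zero_sub_max_neg_zero_eq_self (y - h)
    have := max_zero_sub_max_neg_zero_eq_self (x - h)
    simp only [neg_sub] at *
    linarith
  rw [hsplit] at hjensen
  unfold extremalProfile
  linarith

lemma abs_extremalProfile_sub_le (hω : IsModulus ω) (hconc : ConcaveOn ℝ (Ici 0) ω)
    (hh : 0 ≤ h) (hhΔ : h ≤ Δ) (x y : ℝ) :
    |extremalProfile ω h Δ y - extremalProfile ω h Δ x| ≤ ω |y - x| := by
  wlog hxy : x ≤ y generalizing x y
  · rw [abs_sub_comm, abs_sub_comm y]; exact this y x (le_of_not_ge hxy)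
  rw [abs_of_nonneg (sub_nonneg.2 (extremalProfile_monotone hω hh hhΔ hxy)),
    abs_of_nonneg (sub_nonneg.2 hxy)]
  exact extremalProfile_sub_le hω hconc hh hhΔ hxy

lemma continuous_extremalProfile (hω : IsModulus ω) (hh : 0 ≤ h) (hhΔ : h ≤ Δ) :
    Continuous (extremalProfile ω h Δ) := by
  obtain ⟨hθ₀, hθ₁⟩ := unitInterval.div_mem hh (hh.trans hhΔ) hhΔ
  have hpos := (hω.continuousOn_perspective (sub_nonneg.2 hθ₁)).comp_continuous
    (by fun_prop : Continuous fun x => max (x - h) 0) fun x => mem_Ici.2 (le_max_right _ _)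
  have hneg := (hω.continuousOn_perspective hθ₀).comp_continuous
    (by fun_prop : Continuous fun x => max (h - x) 0) fun x => mem_Ici.2 (le_max_right _ _)
  exact (continuous_const.add hpos).sub hneg

lemma integral_extremalProfile_zero_h (hω : IsModulus ω) (hh : 0 < h) (hhΔ : h ≤ Δ) :
    ∫ x in 0..h, extremalProfile ω h Δ x = 0 := by
  obtain ⟨hθ₀, -⟩ := unitInterval.div_mem hh.le (hh.le.trans hhΔ) hhΔ
  have hF : EqOn (extremalProfile ω h Δ)
      (fun x => (fun s => h / Δ ^ 2 * (∫ s in 0..Δ, ω s) - perspective ω (h / Δ) s) (h - x))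
      (uIcc 0 h) := by
    intro x hx
    rw [uIcc_of_le hh.le] at hx
    simp only [extremalProfile, max_eq_right (sub_nonpos.2 hx.2),
      max_eq_left (sub_nonneg.2 hx.2), hω.perspective_zero_right, add_zero]
  have hΔ : Δ ≠ 0 := (hh.trans_le hhΔ).ne'
  have hθΔ := integral_perspective ω (h / Δ) Δ
  rw [div_mul_cancel₀ h hΔ] at hθΔ
  rw [integral_congr hF, integral_comp_sub_left (fun s => _ - perspective ω (h / Δ) s) h,
    sub_self, sub_zero,
    integral_sub intervalIntegrable_const (hω.intervalIntegrable_perspective hθ₀ hh.le),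
    intervalIntegral.integral_const, smul_eq_mul, hθΔ]
  field_simp
  ring

lemma integral_extremalProfile_zero_Δ (hω : IsModulus ω) (hh : 0 < h) (hhΔ : h ≤ Δ) :
    ∫ x in 0..Δ, extremalProfile ω h Δ x = (1 - h / Δ) * ∫ s in 0..Δ, ω s := by
  obtain ⟨-, hθ₁⟩ := unitInterval.div_mem hh.le (hh.le.trans hhΔ) hhΔ
  have hF : EqOn (extremalProfile ω h Δ)
      (fun x => (fun s => h / Δ ^ 2 * (∫ s in 0..Δ, ω s) + perspective ω (1 - h / Δ) s) (x - h))
      (uIcc h Δ) := by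
    intro x hx
    rw [uIcc_of_le hhΔ] at hx
    simp only [extremalProfile, max_eq_right (sub_nonpos.2 hx.1),
      max_eq_left (sub_nonneg.2 hx.1), hω.perspective_zero_right, sub_zero]
  have hΔ : Δ ≠ 0 := (hh.trans_le hhΔ).ne'
  have hμΔ : Δ - h = (1 - h / Δ) * Δ := by field_simp
  have hmono := extremalProfile_monotone hω hh.le hhΔ
  rw [← integral_add_adjacent_intervals hmono.intervalIntegrable hmono.intervalIntegrable,
    integral_extremalProfile_zero_h hω hh hhΔ, zero_add, integral_congr hF,
    integral_comp_sub_right (fun s => _ + perspective ω _ s) h, sub_self,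
    integral_add intervalIntegrable_const
      (hω.intervalIntegrable_perspective (sub_nonneg.2 hθ₁) (sub_nonneg.2 hhΔ)),
    intervalIntegral.integral_const, smul_eq_mul, hμΔ, integral_perspective]
  field_simp
  ring

lemma integral_extremalProfile_ge (hω : IsModulus ω) (hh : 0 < h) (hhΔ : h ≤ Δ) (y : ℝ) :
    (1 - h / Δ) * (∫ s in 0..Δ, ω s) + extremalProfile ω h Δ Δ * (y - Δ)
      ≤ ∫ x in 0..y, extremalProfile ω h Δ x := by
  have hF := extremalProfile_monotone hω hh.le hhΔ
  rw [← integral_add_adjacent_intervals hF.intervalIntegrable hF.intervalIntegrable,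
    integral_extremalProfile_zero_Δ hω hh hhΔ]
  linarith [hF.mul_sub_le_integral Δ y]

end extremalProfile

lemma infDist_eq_dist_of_separated {X : Type*} [PseudoMetricSpace X] {s : Set X} {p x : X}
    {r : ℝ} (hp : p ∈ s) (hsep : ∀ q ∈ s, q ≠ p → 2 * r ≤ dist q p) (hx : dist x p ≤ r) :
    infDist x s = dist x p := by
  refine le_antisymm (infDist_le_dist_of_mem hp) ((le_infDist ⟨p, hp⟩).2 fun q hq => ?_)
  rcases eq_or_ne q p with rfl | hqp
  · exact le_rfl
  · linarith [hsep q hq hqp, dist_triangle q x p, dist_comm x q]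

lemma IsLeast.infDist_eq_sub {s : Set ℝ} {p u : ℝ} (hp : IsLeast s p) (hu : u ≤ p) :
    infDist u s = p - u := by
  refine le_antisymm ?_ ((le_infDist ⟨p, hp.1⟩).2 fun x hx => ?_)
  · simpa [Real.dist_eq, abs_of_nonpos (sub_nonpos.2 hu)]
      using infDist_le_dist_of_mem (x := u) hp.1
  · rw [Real.dist_eq]; linarith [hp.2 hx, neg_le_abs (u - x)]

lemma IsGreatest.infDist_eq_sub {s : Set ℝ} {q u : ℝ} (hq : IsGreatest s q) (hu : q ≤ u) :
    infDist u s = u - q := by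
  refine le_antisymm ?_ ((le_infDist ⟨q, hq.1⟩).2 fun x hx => ?_)
  · simpa [Real.dist_eq, abs_of_nonneg (sub_nonneg.2 hu)]
      using infDist_le_dist_of_mem (x := u) hq.1
  · rw [Real.dist_eq]; linarith [hq.2 hx, le_abs_self (u - x)]

lemma infDist_eq_min_sub {s : Set ℝ} {p q u : ℝ} (hp : p ∈ s) (hq : q ∈ s)
    (hgap : ∀ x ∈ s, x ≤ p ∨ q ≤ x) (hu : u ∈ Icc p q) :
    infDist u s = min (u - p) (q - u) := by
  refine le_antisymm (le_min ?_ ?_) ((le_infDist ⟨p, hp⟩).2 fun x hx => ?_)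
  · simpa [Real.dist_eq, abs_of_nonneg (sub_nonneg.2 hu.1)]
      using infDist_le_dist_of_mem (x := u) hp
  · simpa [Real.dist_eq, abs_of_nonpos (sub_nonpos.2 hu.2)]
      using infDist_le_dist_of_mem (x := u) hq
  · rw [Real.dist_eq]
    rcases hgap x hx with hxp | hqx
    · linarith [min_le_left (u - p) (q - u), le_abs_self (u - x)]
    · linarith [min_le_right (u - p) (q - u), neg_le_abs (u - x)]

lemma integral_comp_infDist_of_separated {g : ℝ → ℝ} (hg : Continuous g) {s : Set ℝ}
    {p r : ℝ} (hp : p ∈ s) (hsep : ∀ q ∈ s, q ≠ p → 2 * r ≤ dist q p) (hr : 0 ≤ r) :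
    ∫ u in p - r..p + r, g (infDist u s) = 2 * ∫ x in 0..r, g x := by
  rw [← integral_comp_abs_sub hg p hr]
  refine integral_congr fun u hu => ?_
  rw [uIcc_of_le (by linarith)] at hu
  have hup : dist u p ≤ r := by rw [Real.dist_eq, abs_le]; constructor <;> linarith [hu.1, hu.2]
  simp only [infDist_eq_dist_of_separated hp hsep hup, Real.dist_eq]

section nodes

variable {t : ℕ → ℝ} {n : ℕ} {c : ℝ}

lemma mul_sub_le_sub_of_add_le_succ (hstep : ∀ i, 1 ≤ i → i < n → t i + c ≤ t (i + 1))
    {i j : ℕ} (hi : i ∈ Icc 1 n) (hj : j ∈ Icc 1 n) (hij : i ≤ j) : c * (j - i) ≤ t j - t i := by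
  have hmono : MonotoneOn (fun i : ℕ => t i - c * i) (Icc 1 n) :=
    monotoneOn_of_le_add_one ordConnected_Icc fun k _ hk hk1 => by
      have := hstep k hk.1 hk1.2
      push_cast
      linarith
  have := hmono hi hj hij
  simp only at this
  linarith

lemma monotoneOn_of_add_le_succ (hstep : ∀ i, 1 ≤ i → i < n → t i + c ≤ t (i + 1))
    (hc : 0 ≤ c) : MonotoneOn t (Icc 1 n) := fun i hi j hj hij => by
  have := mul_sub_le_sub_of_add_le_succ hstep hi hj hij
  have : (0 : ℝ) ≤ c * (j - i) := mul_nonneg hc (sub_nonneg.2 (Nat.cast_le.2 hij))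
  linarith

lemma le_abs_sub_of_add_le_succ (hstep : ∀ i, 1 ≤ i → i < n → t i + c ≤ t (i + 1)) (hc : 0 ≤ c)
    {i j : ℕ} (hi : i ∈ Icc 1 n) (hj : j ∈ Icc 1 n) (hij : i ≠ j) : c ≤ |t j - t i| := by
  wlog hlt : i < j generalizing i j
  · rw [abs_sub_comm]; exact this hj hi hij.symm (by omega)
  have hgap := mul_sub_le_sub_of_add_le_succ hstep hi hj hlt.le
  have : (1 : ℝ) ≤ j - i := by
    rw [le_sub_iff_add_le']; exact_mod_cast hlt
  nlinarith [le_abs_self (t j - t i)]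

lemma integral_comp_infDist_image_Icc_succ {g : ℝ → ℝ} (hg : Continuous g)
    (ht : MonotoneOn t (Icc 1 n)) {k : ℕ} (hk : 1 ≤ k) (hkn : k < n) :
    ∫ u in t k..t (k + 1), g (infDist u (t '' Icc 1 n))
      = 2 * ∫ s in 0..(t (k + 1) - t k) / 2, g s := by
  have hkI : k ∈ Icc 1 n := ⟨hk, hkn.le⟩
  have hk1I : k + 1 ∈ Icc 1 n := ⟨by omega, hkn⟩
  have hle : t k ≤ t (k + 1) := ht hkI hk1I (by omega)
  have hgap : ∀ x ∈ t '' Icc 1 n, x ≤ t k ∨ t (k + 1) ≤ x := by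
    rintro _ ⟨j, hj, rfl⟩
    rcases le_or_gt j k with hjk | hkj
    · exact Or.inl (ht hj hkI hjk)
    · exact Or.inr (ht hk1I hj hkj)
  rw [← integral_comp_min_sub_sub hg hle]
  refine integral_congr fun u hu => ?_
  rw [uIcc_of_le hle] at hu
  simp only [infDist_eq_min_sub (mem_image_of_mem t hkI) (mem_image_of_mem t hk1I) hgap hu]

lemma le_integral_comp_infDist_image {g : ℝ → ℝ} (hg : Continuous g) {α β : ℝ}
    (hG : ∀ y, α * y + β ≤ ∫ s in 0..y, g s) (hn : 1 ≤ n) (ht : MonotoneOn t (Icc 1 n))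
    {a b : ℝ} (ha : a ≤ t 1) (hb : t n ≤ b) :
    α * (b - a) + 2 * n * β ≤ ∫ u in a..b, g (infDist u (t '' Icc 1 n)) := by
  set f := fun u => g (infDist u (t '' Icc 1 n))
  have hf : ∀ p q, IntervalIntegrable f volume p q := fun p q =>
    (hg.comp (continuous_infDist_pt _)).intervalIntegrable p q
  have hleft : ∫ u in a..t 1, f u = ∫ s in 0..t 1 - a, g s := by
    have hS := ht.map_isLeast (isLeast_Icc hn)
    rw [integral_congr (g := fun u => g (t 1 - u)) fun u hu => by
      rw [uIcc_of_le ha] at hu; simp only [f, hS.infDist_eq_sub hu.2],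
      integral_comp_sub_left, sub_self]
  have hright : ∫ u in t n..b, f u = ∫ s in 0..b - t n, g s := by
    have hS := ht.map_isGreatest (isGreatest_Icc hn)
    rw [integral_congr (g := fun u => g (u - t n)) fun u hu => by
      rw [uIcc_of_le hb] at hu; simp only [f, hS.infDist_eq_sub hu.1],
      integral_comp_sub_right, sub_self]
  have hmiddle : ∀ m, 1 ≤ m → m ≤ n →
      α * (t m - t 1) + 2 * ((m : ℝ) - 1) * β ≤ ∫ u in t 1..t m, f u := by
    intro m hm
    induction m, hm using Nat.le_induction with
    | base => simp
    | succ m hm ih =>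
      intro hmn
      have hpiece := integral_comp_infDist_image_Icc_succ hg ht hm hmn
      rw [← integral_add_adjacent_intervals (hf _ _) (hf _ _)]
      push_cast
      linarith [ih (by omega), hG ((t (m + 1) - t m) / 2)]
  rw [← integral_add_adjacent_intervals (hf a (t n)) (hf _ b),
    ← integral_add_adjacent_intervals (hf a (t 1)) (hf _ (t n)), hleft, hright]
  linarith [hG (t 1 - a), hG (b - t n), hmiddle n hn le_rfl]

end nodes

theorem extremal_zero_means_large_integral_general
    (ω : ℝ → ℝ) (hω : IsModulus ω) (hconc : ConcaveOn ℝ (Set.Ici 0) ω)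
    (a b : ℝ) (n : ℕ) (hn : 0 < n) (h : ℝ) (hh : 0 < h)
    (t : ℕ → ℝ) (hta : a ≤ t 1 - h)
    (htsep : ∀ i, 1 ≤ i → i < n → t i + h < t (i + 1) - h)
    (htb : t n + h ≤ b) :
    ∃ f : ℝ → ℝ, HHolder ω a b f ∧
      (∀ i, 1 ≤ i → i ≤ n → ∫ u in (t i - h)..(t i + h), f u = 0) ∧
      2 * (n : ℝ) * (1 - 2 * (n : ℝ) * h / (b - a)) *
          ∫ s in (0:ℝ)..((b - a) / (2 * (n : ℝ))), ω s ≤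
        ∫ u in a..b, f u := by
  have hstep : ∀ i, 1 ≤ i → i < n → t i + 2 * h ≤ t (i + 1) := fun i hi hin => by
    linarith [htsep i hi hin]
  have hspan : 2 * n * h ≤ b - a := by
    have := mul_sub_le_sub_of_add_le_succ hstep (left_mem_Icc.2 hn) (right_mem_Icc.2 hn) hn
    push_cast at this
    linarith
  set Δ := (b - a) / (2 * n) with hΔ
  have hhΔ : h ≤ Δ := (le_div_iff₀ (by positivity)).2 (by linarith)
  have hF := continuous_extremalProfile hω hh.le hhΔ
  refine ⟨fun u => extremalProfile ω h Δ (infDist u (t '' Icc 1 n)), fun s _ u _ => ?_,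
    fun i hi hin => ?_, ?_⟩
  · refine (abs_extremalProfile_sub_le hω hconc hh.le hhΔ _ _).trans (hω.mono (abs_nonneg _) ?_)
    simpa [Real.dist_eq] using (lipschitz_infDist_pt (t '' Icc 1 n)).dist_le_mul u s
  · have hiI : i ∈ Icc 1 n := ⟨hi, hin⟩
    rw [integral_comp_infDist_of_separated hF (mem_image_of_mem t hiI) ?_ hh.le,
      integral_extremalProfile_zero_h hω hh hhΔ, mul_zero]
    rintro _ ⟨j, hj, rfl⟩ hji
    simpa [Real.dist_eq] using le_abs_sub_of_add_le_succ hstep (by positivity) hiI hj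
      (by rintro rfl; exact hji rfl)
  · have hθ : 2 * n * h / (b - a) = h / Δ := by
      rw [hΔ]; field_simp
    calc _ = extremalProfile ω h Δ Δ * (b - a)
          + 2 * n * ((1 - h / Δ) * (∫ s in 0..Δ, ω s) - extremalProfile ω h Δ Δ * Δ) := by
          rw [hθ, hΔ]; field_simp; ring
      _ ≤ _ := le_integral_comp_infDist_image hF
          (fun y => by linarith [integral_extremalProfile_ge hω hh hhΔ y]) hn
          (monotoneOn_of_add_le_succ hstep (by positivity)) (by linarith) (by linarith)

/-- Existence of a real-valued extremal function with zero mean values over the intervals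
`[tᵢ − h, tᵢ + h]`, `i = 1, …, n`, and large integral over `[a,b]` (concave modulus). -/
theorem extremal_zero_means_large_integral
    (ω : ℝ → ℝ) (hω : IsModulus ω) (hconc : ConcaveOn ℝ (Set.Ici 0) ω)
    (a b : ℝ) (hab : a < b) (n : ℕ) (hn : 0 < n) (h : ℝ) (hh : 0 < h)
    (t : ℕ → ℝ) (hta : a ≤ t 1 - h)
    (htsep : ∀ i, 1 ≤ i → i < n → t i + h < t (i + 1) - h)
    (htb : t n + h ≤ b) :
    ∃ f : ℝ → ℝ, HHolder ω a b f ∧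
      (∀ i, 1 ≤ i → i ≤ n → ∫ u in (t i - h)..(t i + h), f u = 0) ∧
      2 * (n : ℝ) * (1 - 2 * (n : ℝ) * h / (b - a)) *
          ∫ s in (0:ℝ)..((b - a) / (2 * (n : ℝ))), ω s ≤
        ∫ u in a..b, f u :=
  extremal_zero_means_large_integral_general ω hω hconc a b n hn h hh t hta htsep htb
end
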